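/- arXiv:2407.12928 — 8 statements merged into one kernel-verified Lean document; each statement's English description precedes it below -/
import Mathlib

section
/- Let p be a prime and n ≥ 1 an integer. Then the p-adic valuation of n satisfies ν_p(n) = ⌊ (gcd(n, p^n)^(n+1) mod (p^(n+1) − 1)^2) / (p^(n+1) − 1) ⌋. -/
/-!
Write `v = ν_p(n)` and `M = p^(n+1) - 1`. Then `gcd(n, p^n) = p^v`, so the power in question is
`(p^(n+1))^v = (1 + M)^v ≡ 1 + v M (mod M^2)` by the binomial theorem. Since `v ≤ n < M`, the
number `1 + v M` is already reduced mod `M^2`, and dividing it by `M` returns `v`.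
-/

namespace Nat

theorem gcd_prime_pow_eq_pow_padicValNat {p n k : ℕ} [hp : Fact p.Prime] (hn : n ≠ 0)
    (hk : padicValNat p n ≤ k) : n.gcd (p ^ k) = p ^ padicValNat p n := by
  refine Nat.dvd_antisymm ?_ (Nat.dvd_gcd pow_padicValNat_dvd (Nat.pow_dvd_pow p hk))
  obtain ⟨j, -, hj⟩ := (Nat.dvd_prime_pow hp.out).1 (Nat.gcd_dvd_right n (p ^ k))
  rw [hj]
  exact Nat.pow_dvd_pow p ((padicValNat_dvd_iff_le hn).1 (hj ▸ Nat.gcd_dvd_left n (p ^ k)))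

theorem gcd_prime_pow_self_eq_pow_padicValNat (p n : ℕ) [Fact p.Prime] :
    n.gcd (p ^ n) = p ^ padicValNat p n := by
  rcases eq_or_ne n 0 with rfl | hn
  · simp
  · exact gcd_prime_pow_eq_pow_padicValNat hn (padicValNat_le_self n)

theorem one_add_pow_modEq_one_add_mul (M v : ℕ) : (1 + M) ^ v ≡ 1 + v * M [MOD M ^ 2] := by
  induction v with
  | zero => simp [ModEq.refl]
  | succ k ih =>
    calc (1 + M) ^ (k + 1) = (1 + M) ^ k * (1 + M) := pow_succ _ _
    _ ≡ (1 + k * M) * (1 + M) [MOD M ^ 2] := ih.mul_right _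
    _ = 1 + (k + 1) * M + k * M ^ 2 := by ring
    _ ≡ 1 + (k + 1) * M [MOD M ^ 2] := (modEq_add_mul_modulus_iff.2 (ModEq.refl _)).symm

theorem one_add_pow_mod_sq_div_self {M v : ℕ} (hv : v < M) : (1 + M) ^ v % M ^ 2 / M = v := by
  rw [one_add_pow_modEq_one_add_mul M v]
  rcases Nat.lt_or_ge M 2 with hM | hM
  · obtain rfl : v = 0 := by omega
    obtain rfl : M = 1 := by omega
    simp
  have hlt : 1 + v * M < M ^ 2 := by nlinarith
  rw [Nat.mod_eq_of_lt hlt, Nat.add_mul_div_right _ _ (by omega), Nat.div_eq_of_lt (by omega),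
    zero_add]

end Nat

theorem stmt_0_general (p n : ℕ) (hp : p.Prime) :
    padicValNat p n =
      (Nat.gcd n (p ^ n)) ^ (n + 1) % (p ^ (n + 1) - 1) ^ 2 / (p ^ (n + 1) - 1) := by
  have := Fact.mk hp
  set M := p ^ (n + 1) - 1
  have hpow : p ^ (n + 1) = 1 + M := by have := Nat.one_le_pow (n + 1) p hp.pos; omega
  have hvM : padicValNat p n < M := by
    have := Nat.lt_two_pow_self (n := n + 1)
    have := Nat.pow_le_pow_left hp.two_le (n + 1)
    have := Nat.padicValNat_le_self (p := p) n
    omega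
  rw [Nat.gcd_prime_pow_self_eq_pow_padicValNat, ← pow_mul, mul_comm, pow_mul, hpow,
    Nat.one_add_pow_mod_sq_div_self hvM]

/-- For a prime `p` and `n ≥ 1`, the p-adic valuation of `n` satisfies
`ν_p(n) = ⌊(gcd(n, p^n)^(n+1) mod (p^(n+1) − 1)^2) / (p^(n+1) − 1)⌋`. -/
theorem stmt_0 (p n : ℕ) (hp : p.Prime) (hn : 1 ≤ n) :
    padicValNat p n =
      (Nat.gcd n (p ^ n)) ^ (n + 1) % (p ^ (n + 1) - 1) ^ 2 / (p ^ (n + 1) - 1) :=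
  stmt_0_general p n hp
end

section
/- For all natural numbers n and m, n·m = ⌊ 2^(n+m+4) / ⌊ ⌊ 2^(n+m+4)/(n+1) ⌋ / (m+1) ⌋ ⌋ ∸ (n+m+1). -/
lemma aux_sq_le (n : ℕ) : (n + 1) * (n + 1) ≤ 2 ^ (n + 2) := by
  induction n with
  | zero => norm_num
  | succ k ih =>
    by_cases hk : k = 0
    · subst hk; norm_num
    · by_cases hk1 : k = 1
      · subst hk1; norm_num
      · have hk2 : 2 ≤ k := by omega
        have : (2:ℕ) ^ (k + 1 + 2) = 2 * 2 ^ (k + 2) := by ring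
        rw [this]
        nlinarith [ih]

lemma aux_div_div (N d : ℕ) (hd : 0 < d) (h : d * d ≤ N) : N / (N / d) = d := by
  have hq : d ≤ N / d := (Nat.le_div_iff_mul_le hd).2 h
  have h1 : d * (N / d) ≤ N := by
    have := Nat.div_mul_le_self N d
    linarith [this, Nat.mul_comm (N / d) d]
  have hmod : N % d < d := Nat.mod_lt _ hd
  have hdm := Nat.div_add_mod N d
  have h2 : N < (d + 1) * (N / d) := by nlinarith
  exact Nat.div_eq_of_lt_le h1 h2

/-- Multiplication as an arithmetic term. -/
theorem stmt_1 (n m : ℕ) :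
    n * m = 2 ^ (n + m + 4) / (2 ^ (n + m + 4) / (n + 1) / (m + 1)) - (n + m + 1) := by
  have key : ((n + 1) * (m + 1)) * ((n + 1) * (m + 1)) ≤ 2 ^ (n + m + 4) := by
    have h1 := aux_sq_le n
    have h2 := aux_sq_le m
    have : (2:ℕ) ^ (n + m + 4) = 2 ^ (n + 2) * 2 ^ (m + 2) := by
      rw [← pow_add]; ring_nf
    rw [this]
    calc ((n + 1) * (m + 1)) * ((n + 1) * (m + 1))
        = ((n + 1) * (n + 1)) * ((m + 1) * (m + 1)) := by ring
      _ ≤ 2 ^ (n + 2) * 2 ^ (m + 2) := Nat.mul_le_mul h1 h2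
  have hd : 0 < (n + 1) * (m + 1) := by positivity
  have h := aux_div_div (2 ^ (n + m + 4)) ((n + 1) * (m + 1)) hd key
  rw [Nat.div_div_eq_div_mul, h]
  have : (n + 1) * (m + 1) = n * m + (n + m + 1) := by ring
  omega
end

section
/- For all natural numbers n and m, n^m = 2^((n·m+n+1)·m) mod (2^(n·m+n+1) − n). -/
/-!
Put `k = n m + n + 1`. Modulo `2 ^ k - n` we have `2 ^ k ≡ n`, hence `2 ^ (k m) ≡ n ^ m`; and
`n ^ m ≤ 2 ^ (n m)` is small enough that `n ^ m < 2 ^ k - n`, so `n ^ m` is the least residue.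
-/

theorem Nat.pow_mod_sub_eq_of_pow_add_lt {a b m : ℕ} (h : b ^ m + b < a) :
    a ^ m % (a - b) = b ^ m :=
  calc a ^ m % (a - b) = b ^ m % (a - b) := ((Nat.modEq_sub (by omega : b ≤ a)).pow m :)
    _ = b ^ m := Nat.mod_eq_of_lt (by omega)

theorem Nat.pow_add_self_lt_two_pow (n m : ℕ) : n ^ m + n < 2 ^ (n * m + n + 1) := by
  have hpow : n ^ m ≤ 2 ^ (n * m + n) :=
    calc n ^ m ≤ (2 ^ n) ^ m := Nat.pow_le_pow_left Nat.lt_two_pow_self.le m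
      _ = 2 ^ (n * m) := by rw [← pow_mul]
      _ ≤ 2 ^ (n * m + n) := Nat.pow_le_pow_right two_pos (Nat.le_add_right _ _)
  have hself : n < 2 ^ (n * m + n) :=
    Nat.lt_two_pow_self.trans_le (Nat.pow_le_pow_right two_pos (Nat.le_add_left _ _))
  rw [pow_succ]
  omega

/-- Exponentiation as an arithmetic term: `n^m = 2^((nm+n+1)m) mod (2^(nm+n+1) − n)`. -/
theorem stmt_2 (n m : ℕ) :
    n ^ m = 2 ^ ((n * m + n + 1) * m) % (2 ^ (n * m + n + 1) - n) := by
  rw [pow_mul, Nat.pow_mod_sub_eq_of_pow_add_lt (Nat.pow_add_self_lt_two_pow n m)]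
end

section
/- For all positive integers m and n, gcd(m, n) = ( ⌊ ((2^(m²·n·(n+1)) − 2^(m²·n)) · (2^(m²·n²) − 1)) / ((2^(m²·n) − 1) · (2^(m·n²) − 1) · 2^(m²·n²)) ⌋ ) mod 2^(m·n). -/
/-!
Put `B = 2 ^ (m * n)`. Both geometric-series factors of the numerator cancel against the
denominator, leaving `(∑ B ^ (m * i + n * j)) / B ^ (m * n) % B` over `1 ≤ i ≤ n`, `0 ≤ j < m`.
There are only `m * n < B` terms, so no carries occur and this is the base-`B` digit of the sum at
position `m * n`, i.e. the number of solutions of `m * i + n * j = m * n`. Writing `m = d * s`,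
`n = d * t` with `d = gcd m n`, these are exactly `(t * u, s * (d - u))` for `1 ≤ u ≤ d`.
-/

open Finset

theorem sum_pow_div_pow_mod_eq_card {ι : Type*} (s : Finset ι) (e : ι → ℕ) {B : ℕ}
    (hB : #s < B) (k : ℕ) :
    (∑ x ∈ s, B ^ e x) / B ^ k % B = #{x ∈ s | e x = k} := by
  set low : ι → ℕ := fun x => if e x < k then B ^ e x else 0
  set high : ι → ℕ := fun x => if k < e x then B ^ (e x - (k + 1)) else 0
  have hB1 : 1 ≤ B := by omega
  have hsplit : ∀ x, B ^ e x = low x + B ^ k * ((if e x = k then 1 else 0) + B * high x) := by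
    intro x
    rcases lt_trichotomy (e x) k with h | h | h
    · simp [low, high, h, h.ne, h.not_gt]
    · simp [low, high, h]
    · simp only [low, high, h, h.ne', h.not_gt, if_true, if_false, zero_add]
      rw [← mul_assoc, ← pow_succ, ← pow_add]
      congr 1
      omega
  have hlow : ∑ x ∈ s, low x < B ^ k := by
    have hterm : ∀ x, B * low x ≤ B ^ k := fun x => by
      by_cases h : e x < k
      · simpa [low, h, ← pow_succ'] using Nat.pow_le_pow_right hB1 h
      · simp [low, h]
    have : B * ∑ x ∈ s, low x < B * B ^ k :=
      calc B * ∑ x ∈ s, low x = ∑ x ∈ s, B * low x := mul_sum _ _ _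
        _ ≤ #s * B ^ k := by simpa using sum_le_sum fun x _ => hterm x
        _ < B * B ^ k := Nat.mul_lt_mul_of_pos_right hB (by positivity)
    exact lt_of_mul_lt_mul_left' this
  rw [sum_congr rfl fun x _ => hsplit x, sum_add_distrib, ← mul_sum, sum_add_distrib, ← mul_sum,
    sum_boole, Nat.cast_id, Nat.add_mul_div_left _ _ (by positivity), Nat.div_eq_of_lt hlow, zero_add,
    Nat.add_mul_mod_self_left, Nat.mod_eq_of_lt ((card_filter_le _ _).trans_lt hB)]

theorem card_filter_mul_add_mul_eq_mul {m n : ℕ} (hm : 0 < m) (hn : 0 < n) :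
    #{p ∈ Icc 1 n ×ˢ range m | m * p.1 + n * p.2 = m * n} = Nat.gcd m n := by
  obtain ⟨s, t, hst, hms, hnt⟩ := Nat.exists_coprime m n
  set d := Nat.gcd m n
  have hd : 0 < d := Nat.gcd_pos_of_pos_left n hm
  have ht : 0 < t := Nat.pos_of_mul_pos_right (hnt ▸ hn)
  clear_value d
  suffices h : {p ∈ Icc 1 n ×ˢ range m | m * p.1 + n * p.2 = m * n} =
      (Icc 1 d).image fun u => (t * u, s * (d - u)) by
    rw [h, card_image_of_injective _ fun u v huv => Nat.eq_of_mul_eq_mul_left ht (congrArg Prod.fst huv),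
      Nat.card_Icc, Nat.add_sub_cancel]
  ext ⟨i, j⟩
  simp only [mem_filter, mem_product, mem_Icc, mem_range, mem_image, Prod.mk.injEq]
  rw [hms, hnt]
  constructor
  · rintro ⟨⟨⟨hi, hin⟩, hj⟩, heq⟩
    have hred : s * i + t * j = s * t * d := Nat.eq_of_mul_eq_mul_right hd (by linarith)
    obtain ⟨u, rfl⟩ : t ∣ i :=
      hst.symm.dvd_of_dvd_mul_left ((Nat.dvd_add_left (dvd_mul_right t j)).mp
        (hred ▸ ⟨s * d, by ring⟩))
    have hu : s * u + j = s * d := Nat.eq_of_mul_eq_mul_left ht (by linarith)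
    refine ⟨u, ⟨?_, ?_⟩, rfl, ?_⟩
    · exact Nat.pos_of_ne_zero (by rintro rfl; omega)
    · exact Nat.le_of_mul_le_mul_left (by linarith) ht
    · rw [Nat.mul_sub]; omega
  · rintro ⟨u, ⟨hu, hud⟩, rfl, rfl⟩
    obtain ⟨w, rfl⟩ := Nat.exists_eq_add_of_le hud
    refine ⟨⟨⟨Nat.mul_pos ht hu, ?_⟩, ?_⟩, ?_⟩
    · nlinarith
    · rw [Nat.add_sub_cancel_left]; nlinarith
    · rw [Nat.add_sub_cancel_left]; ring

theorem pow_sub_mul_pow_sub_eq_mul_sum (B m n : ℕ) (hB : 1 ≤ B) :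
    (B ^ (m * (n + 1)) - B ^ m) * (B ^ (m * n) - 1) =
      (B ^ m - 1) * (B ^ n - 1) * ∑ p ∈ Icc 1 n ×ˢ range m, B ^ (m * p.1 + n * p.2) := by
  have hX : 1 ≤ B ^ m := Nat.one_le_pow _ _ hB
  have hY : 1 ≤ B ^ n := Nat.one_le_pow _ _ hB
  have hsumX : ∑ i ∈ Icc 1 n, (B ^ m) ^ i = B ^ m * ∑ i ∈ range n, (B ^ m) ^ i := by
    rw [mul_sum, ← Ico_add_one_right_eq_Icc, ← zero_add 1, ← sum_Ico_add', ← range_eq_Ico]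
    simp only [pow_succ']
  calc (B ^ (m * (n + 1)) - B ^ m) * (B ^ (m * n) - 1)
      = (B ^ m * ((B ^ m) ^ n - 1)) * ((B ^ n) ^ m - 1) := by
        rw [mul_comm m n, pow_mul B n m, pow_mul B m (n + 1), pow_succ', Nat.mul_sub_one (B ^ m)]
    _ = (B ^ m - 1) * (B ^ n - 1) * ((∑ i ∈ Icc 1 n, (B ^ m) ^ i) * ∑ j ∈ range m, (B ^ n) ^ j) := by
        rw [← geom_sum_mul_of_one_le hX, ← geom_sum_mul_of_one_le hY, hsumX]; ring
    _ = _ := by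
        rw [sum_mul_sum, sum_product]
        simp only [← pow_mul, ← pow_add]

/-- Mazzanti's arithmetic term for the gcd of two positive integers. -/
theorem stmt_3 (m n : ℕ) (hm : 1 ≤ m) (hn : 1 ≤ n) :
    Nat.gcd m n =
      ((2 ^ (m ^ 2 * n * (n + 1)) - 2 ^ (m ^ 2 * n)) * (2 ^ (m ^ 2 * n ^ 2) - 1)) /
          ((2 ^ (m ^ 2 * n) - 1) * (2 ^ (m * n ^ 2) - 1) * 2 ^ (m ^ 2 * n ^ 2)) %
        2 ^ (m * n) := by
  rw [show m ^ 2 * n * (n + 1) = m * n * (m * (n + 1)) by ring, show m ^ 2 * n = m * n * m by ring,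
    show m ^ 2 * n ^ 2 = m * n * (m * n) by ring, show m * n ^ 2 = m * n * n by ring]
  simp only [pow_mul 2 (m * n)]
  set B := 2 ^ (m * n)
  have hB : 1 < B := Nat.one_lt_two_pow (by positivity)
  have hfactor : 0 < (B ^ m - 1) * (B ^ n - 1) :=
    Nat.mul_pos (Nat.sub_pos_of_lt (Nat.one_lt_pow (by omega) hB))
      (Nat.sub_pos_of_lt (Nat.one_lt_pow (by omega) hB))
  have hcard : #(Icc 1 n ×ˢ range m) < B := by
    simpa [mul_comm n m] using Nat.lt_two_pow_self
  rw [pow_sub_mul_pow_sub_eq_mul_sum B m n hB.le, Nat.mul_div_mul_left _ _ hfactor,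
    sum_pow_div_pow_mod_eq_card _ _ hcard, card_filter_mul_add_mul_eq_mul hm hn]
end

section
/- For every integer n ≥ 1, the central binomial coefficient satisfies C(2n, n) = ( ⌊ (1 + 2^(2n))^(2n) / 2^(2n²) ⌋ ) mod 2^(2n). -/
/-!
Put `B = 2 ^ (2n)`. By the binomial theorem `(1 + B) ^ (2n) = ∑ₖ C(2n, k) Bᵏ`, and every
`C(2n, k)` is below `∑ₖ C(2n, k) = B`, so this sum is the base-`B` expansion of `(1 + B) ^ (2n)`.
Since `2 ^ (2n²) = Bⁿ`, the right-hand side extracts its `n`-th digit, which is `C(2n, n)`.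
-/

open Finset

section BaseExpansion

variable {B : ℕ} {a : ℕ → ℕ}

theorem sum_range_mul_pow_lt_pow (ha : ∀ i, a i < B) (m : ℕ) :
    ∑ i ∈ range m, a i * B ^ i < B ^ m := by
  induction m with
  | zero => simp
  | succ m ih =>
    calc ∑ i ∈ range (m + 1), a i * B ^ i
        < B ^ m + a m * B ^ m := by rw [sum_range_succ]; omega
      _ = (a m + 1) * B ^ m := by ring
      _ ≤ B * B ^ m := Nat.mul_le_mul_right _ (ha m)
      _ = B ^ (m + 1) := (pow_succ' B m).symm

theorem sum_range_mul_pow_div_pow (ha : ∀ i, a i < B) (k m : ℕ) :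
    (∑ i ∈ range (k + m), a i * B ^ i) / B ^ k = ∑ i ∈ range m, a (k + i) * B ^ i := by
  have hB : 0 < B := Nat.zero_lt_of_lt (ha 0)
  have hsplit : ∑ i ∈ range (k + m), a i * B ^ i
      = ∑ i ∈ range k, a i * B ^ i + B ^ k * ∑ i ∈ range m, a (k + i) * B ^ i := by
    rw [sum_range_add, mul_sum]
    congr 1
    refine sum_congr rfl fun i _ => ?_
    ring
  rw [hsplit, Nat.add_mul_div_left _ _ (pow_pos hB k),
    Nat.div_eq_of_lt (sum_range_mul_pow_lt_pow ha k), zero_add]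

theorem sum_range_succ_mul_pow_mod (a : ℕ → ℕ) (B m : ℕ) :
    (∑ i ∈ range (m + 1), a i * B ^ i) % B = a 0 % B := by
  have hsplit : ∑ i ∈ range (m + 1), a i * B ^ i
      = a 0 + B * ∑ i ∈ range m, a (i + 1) * B ^ i := by
    rw [sum_range_succ', mul_sum, pow_zero, mul_one, add_comm]
    congr 1
    refine sum_congr rfl fun i _ => ?_
    ring
  rw [hsplit, Nat.add_mul_mod_self_left]

theorem sum_range_mul_pow_div_pow_mod (ha : ∀ i, a i < B) (k m : ℕ) :
    (∑ i ∈ range (k + m + 1), a i * B ^ i) / B ^ k % B = a k := by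
  rw [add_assoc, sum_range_mul_pow_div_pow ha, sum_range_succ_mul_pow_mod, add_zero,
    Nat.mod_eq_of_lt (ha k)]

end BaseExpansion

theorem one_add_pow_eq_sum_choose_mul_pow (B n : ℕ) :
    (1 + B) ^ n = ∑ k ∈ range (n + 1), n.choose k * B ^ k := by
  rw [add_comm, add_pow]
  exact sum_congr rfl fun k _ => by rw [one_pow, mul_one, mul_comm, Nat.cast_id]

/-- Arithmetic-term representation of the central binomial coefficient. -/
theorem stmt_4 (n : ℕ) (hn : 1 ≤ n) :
    Nat.choose (2 * n) n = ((1 + 2 ^ (2 * n)) ^ (2 * n) / 2 ^ (2 * n ^ 2)) % 2 ^ (2 * n) := by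
  have hdigit : ∀ k, (2 * n).choose k < 2 ^ (2 * n) :=
    fun k => Nat.choose_lt_two_pow _ k (by omega)
  have hpow : 2 ^ (2 * n ^ 2) = (2 ^ (2 * n)) ^ n := by rw [← pow_mul]; ring_nf
  rw [hpow, one_add_pow_eq_sum_choose_mul_pow, show 2 * n + 1 = n + n + 1 by omega,
    sum_range_mul_pow_div_pow_mod hdigit]
end

section
/- Let a and w be natural numbers with 0 ≤ a < 2^w. Then HW((2^w − 1)·(2^w − a + 1)) = 2w if a = 0, and HW((2^w − 1)·(2^w − a + 1)) = w if a ≠ 0. -/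
/-- The Hamming weight of a natural number: the sum of its base-2 digits. -/
def HW (n : ℕ) : ℕ := (Nat.digits 2 n).sum

lemma HW_zero : HW 0 = 0 := by simp [HW]

lemma HW_bit (n r : ℕ) (hr : r < 2) : HW (2 * n + r) = HW n + r := by
  interval_cases r
  · rcases Nat.eq_zero_or_pos n with rfl | hn
    · simp [HW]
    · have hpos : 0 < 2 * n + 0 := by omega
      unfold HW
      rw [Nat.digits_def' (by norm_num : 1 < 2) hpos]
      simp [Nat.mul_div_cancel_left, Nat.mul_mod_right]
  · have hpos : 0 < 2 * n + 1 := by omega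
    unfold HW
    rw [Nat.digits_def' (by norm_num : 1 < 2) hpos]
    have h1 : (2 * n + 1) % 2 = 1 := by omega
    have h2 : (2 * n + 1) / 2 = n := by omega
    rw [h1, h2]
    simp [HW, Nat.add_comm]

lemma HW_pow_sub_one (k : ℕ) : HW (2 ^ k - 1) = k := by
  induction k with
  | zero => simp [HW]
  | succ k ih =>
    have h1 : 1 ≤ 2 ^ k := Nat.one_le_two_pow
    have : 2 ^ (k + 1) - 1 = 2 * (2 ^ k - 1) + 1 := by
      rw [pow_succ]; omega
    rw [this, HW_bit _ _ (by norm_num), ih]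

lemma HW_split (w : ℕ) : ∀ x y : ℕ, y < 2 ^ w → HW (x * 2 ^ w + y) = HW x + HW y := by
  induction w with
  | zero => intro x y hy; interval_cases y; simp [HW]
  | succ w ih =>
    intro x y hy
    have hy2 : y % 2 < 2 := Nat.mod_lt _ (by norm_num)
    have hyd : y / 2 < 2 ^ w := by
      have := Nat.pow_succ 2 w; omega
    have heq : x * 2 ^ (w + 1) + y = 2 * (x * 2 ^ w + y / 2) + y % 2 := by
      have := Nat.div_add_mod y 2
      rw [pow_succ]; ring_nf; omega
    rw [heq, HW_bit _ _ hy2, ih x (y / 2) hyd]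
    have : HW y = HW (y / 2) + y % 2 := by
      conv_lhs => rw [← Nat.div_add_mod y 2]
      exact HW_bit _ _ hy2
    omega

lemma HW_compl (w : ℕ) : ∀ x : ℕ, x < 2 ^ w → HW x + HW (2 ^ w - 1 - x) = w := by
  induction w with
  | zero => intro x hx; interval_cases x; simp [HW]
  | succ w ih =>
    intro x hx
    have h1 : 1 ≤ 2 ^ w := Nat.one_le_two_pow
    have hq : x / 2 < 2 ^ w := by
      have := Nat.pow_succ 2 w; omega
    have hr : x % 2 < 2 := Nat.mod_lt _ (by norm_num)
    have hx2 : x = 2 * (x / 2) + x % 2 := by omega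
    have hc : 2 ^ (w + 1) - 1 - x = 2 * (2 ^ w - 1 - x / 2) + (1 - x % 2) := by
      rw [pow_succ] at *; omega
    have h1r : 1 - x % 2 < 2 := by omega
    calc HW x + HW (2 ^ (w + 1) - 1 - x)
        = HW (2 * (x / 2) + x % 2) + HW (2 * (2 ^ w - 1 - x / 2) + (1 - x % 2)) := by
          rw [← hx2, ← hc]
      _ = (HW (x / 2) + x % 2) + (HW (2 ^ w - 1 - x / 2) + (1 - x % 2)) := by
          rw [HW_bit _ _ hr, HW_bit _ _ h1r]
      _ = w + 1 := by
          have := ih (x / 2) hq; omega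

/-- For `0 ≤ a < 2^w`, the Hamming weight of `(2^w − 1)(2^w − a + 1)` is `2w` if `a = 0`
and `w` if `a ≠ 0`. -/
theorem stmt_5 (a w : ℕ) (h : a < 2 ^ w) :
    (a = 0 → HW ((2 ^ w - 1) * (2 ^ w - a + 1)) = 2 * w) ∧
    (a ≠ 0 → HW ((2 ^ w - 1) * (2 ^ w - a + 1)) = w) := by
  have h1 : 1 ≤ 2 ^ w := Nat.one_le_two_pow
  constructor
  · rintro rfl
    have heq : (2 ^ w - 1) * (2 ^ w - 0 + 1) = 2 ^ (2 * w) - 1 := by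
      obtain ⟨y, hy⟩ : ∃ y, 2 ^ w = y + 1 := ⟨2 ^ w - 1, by omega⟩
      have h2 : 2 ^ (2 * w) = (y + 1) * (y + 1) := by
        rw [two_mul, pow_add, hy]
      rw [hy, h2]
      have e1 : y + 1 - 1 = y := by omega
      have e2 : y + 1 - 0 + 1 = y + 2 := by omega
      rw [e1, e2]
      have : (y + 1) * (y + 1) = y * (y + 2) + 1 := by ring
      omega
    rw [heq, HW_pow_sub_one]
  · intro ha
    have ha1 : 1 ≤ a := Nat.one_le_iff_ne_zero.mpr ha
    obtain ⟨c, rfl⟩ : ∃ c, a = c + 1 := ⟨a - 1, by omega⟩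
    obtain ⟨b, hb⟩ : ∃ b, 2 ^ w = (c + 1) + b := ⟨2 ^ w - (c + 1), by omega⟩
    have heq : (2 ^ w - 1) * (2 ^ w - (c + 1) + 1) = (2 ^ w - (c + 1)) * 2 ^ w + c := by
      rw [hb]
      have e1 : c + 1 + b - 1 = c + b := by omega
      have e2 : c + 1 + b - (c + 1) = b := by omega
      rw [e1, e2]
      ring
    rw [heq, HW_split w _ c (by omega)]
    have hcompl := HW_compl w c (by omega)
    have e3 : 2 ^ w - 1 - c = 2 ^ w - (c + 1) := by omega
    rw [e3] at hcompl
    omega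
end

section
/- Let n ≥ 1 be an integer, let W = n + 4 and Q = 2^(2W), and let M(n) be the rational number (2^W − n² + 1)·(Q^((n+1)²) − 1)/(2^W + 1) + 2·n·Q^(n+2)·(2^W − 1)·(Q^(n+1)·n − Q^n·(n+1) + 1)·(Q^((n+1)²)·n − Q^((n+1)·n)·(n+1) + 1)/((Q − 1)²·(Q^(n+1) − 1)²) − Q^(n+2)·(2^W − 1)·(Q^(n+2)·n² − Q^(n+1)·(2n² + 2n − 1) + Q^n·(n+1)² − Q − 1)·(Q^((n+1)·(n+2))·n² − Q^((n+1)²)·(2n² + 2n − 1) + Q^((n+1)·n)·(n+1)² − Q^(n+1) − 1)/((Q − 1)³·(Q^(n+1) − 1)³). Then M(n) is a nonnegative integer and HW(M(n)) = (n + 4)·(τ(n) + (n+1)²); equivalently, τ(n) = HW(M(n))/(n+4) − (n+1)². -/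
open Finset

namespace Nat

variable {b : ℕ}

theorem digits_sum_add_base_pow_mul (hb : 1 < b) {k x : ℕ} (hx : x < b ^ k) (m : ℕ) :
    (b.digits (x + b ^ k * m)).sum = (b.digits x).sum + (b.digits m).sum := by
  rcases Nat.eq_zero_or_pos m with rfl | hm
  · simp
  have hlen := (digits_length_le_iff hb x).2 hx
  rw [← Nat.add_sub_cancel' hlen, ← digits_append_zeroes_append_digits hb hm]
  simp

theorem digits_sum_add_base_mul (hb : 1 < b) {r : ℕ} (hr : r < b) (m : ℕ) :
    (b.digits (r + b * m)).sum = r + (b.digits m).sum := by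
  have h := digits_sum_add_base_pow_mul hb (k := 1) (by simpa using hr) m
  rcases Nat.eq_zero_or_pos r with rfl | hr0
  · simpa using h
  · rwa [pow_one, digits_of_lt b r hr0.ne' hr, List.sum_singleton] at h

theorem digits_sum_add_digits_sum_base_pow_sub_one_sub (hb : 1 < b) :
    ∀ {k x : ℕ}, x < b ^ k → (b.digits x).sum + (b.digits (b ^ k - 1 - x)).sum = k * (b - 1)
  | 0, x, hx => by simp_all
  | k + 1, x, hx => by
    set q := x / b
    set r := x % b
    have hx' : x = r + b * q := (Nat.mod_add_div x b).symm
    have hr : r < b := Nat.mod_lt x (by omega)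
    have hq : q < b ^ k := Nat.div_lt_of_lt_mul (by rwa [mul_comm, ← pow_succ])
    have hc : b ^ (k + 1) - 1 - x = (b - 1 - r) + b * (b ^ k - 1 - q) := by
      obtain ⟨s, hs⟩ : ∃ s, b ^ k = q + 1 + s := ⟨b ^ k - 1 - q, by omega⟩
      obtain ⟨t, ht⟩ : ∃ t, b = r + 1 + t := ⟨b - 1 - r, by omega⟩
      rw [pow_succ, hs, show q + 1 + s - 1 - q = s by omega, show b - 1 - r = t by omega, hx',
        Nat.sub_sub, ht]
      apply Nat.sub_eq_of_eq_add
      ring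
    have ih := digits_sum_add_digits_sum_base_pow_sub_one_sub hb hq
    rw [hc, hx', digits_sum_add_base_mul hb hr, digits_sum_add_base_mul hb (by omega), add_mul,
      ← ih]
    omega

theorem sum_range_mul_pow_lt {a : ℕ → ℕ} : ∀ {m : ℕ}, (∀ k < m, a k < b) →
    ∑ k ∈ range m, a k * b ^ k < b ^ m
  | 0, _ => by simp
  | m + 1, ha => by
    have ih := sum_range_mul_pow_lt (m := m) fun k hk => ha k (by omega)
    have := Nat.mul_le_mul_right (b ^ m) (ha m (by omega))
    rw [Nat.succ_mul] at this
    rw [sum_range_succ, pow_succ, mul_comm _ b]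
    omega

theorem digits_sum_sum_range_mul_pow (hb : 1 < b) {B m : ℕ} {a : ℕ → ℕ}
    (ha : ∀ k < m, a k < b ^ B) :
    (b.digits (∑ k ∈ range m, a k * (b ^ B) ^ k)).sum
      = ∑ k ∈ range m, (b.digits (a k)).sum := by
  induction m generalizing a with
  | zero => simp
  | succ m ih =>
    have hshift : ∑ k ∈ range (m + 1), a k * (b ^ B) ^ k
        = a 0 + b ^ B * ∑ k ∈ range m, a (k + 1) * (b ^ B) ^ k := by
      rw [sum_range_succ', mul_sum, add_comm]
      simp only [pow_succ, pow_zero, mul_one]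
      congr 1
      exact sum_congr rfl fun k _ => by ring
    rw [hshift, digits_sum_add_base_pow_mul hb (ha 0 (by omega)),
      ih fun k hk => ha (k + 1) (by omega), sum_range_succ' _ m, add_comm]

end Nat

theorem HW_add_two_pow_mul {W x : ℕ} (hx : x < 2 ^ W) (m : ℕ) :
    HW (x + 2 ^ W * m) = HW x + HW m :=
  Nat.digits_sum_add_base_pow_mul one_lt_two hx m

theorem HW_add_HW_two_pow_sub_one_sub {W x : ℕ} (hx : x < 2 ^ W) :
    HW x + HW (2 ^ W - 1 - x) = W := by
  simpa [HW] using Nat.digits_sum_add_digits_sum_base_pow_sub_one_sub one_lt_two hx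

theorem HW_two_pow_sub_one (W : ℕ) : HW (2 ^ W - 1) = W := by
  simpa [HW] using HW_add_HW_two_pow_sub_one_sub (Nat.two_pow_pos W)

theorem HW_two_pow_sub_one_mul {W e : ℕ} (he : e ≤ 2 ^ W) :
    HW ((2 ^ W - 1) * (2 ^ W + 1 - e)) = if e = 0 then 2 * W else W := by
  have hP : 1 ≤ 2 ^ W := Nat.one_le_two_pow
  split_ifs with he0
  · have hsplit : (2 ^ W - 1) * (2 ^ W + 1 - e) = (2 ^ W - 1) + 2 ^ W * (2 ^ W - 1) := by
      subst he0; rw [Nat.sub_zero]; zify [hP]; ring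
    rw [hsplit, HW_add_two_pow_mul (by omega), HW_two_pow_sub_one]
    ring
  · have hsplit : (2 ^ W - 1) * (2 ^ W + 1 - e) = (e - 1) + 2 ^ W * (2 ^ W - e) := by
      zify [hP, he, (by omega : 1 ≤ e), (by omega : e ≤ 2 ^ W + 1)]; ring
    have hlt : e - 1 < 2 ^ W := by omega
    have hcompl := HW_add_HW_two_pow_sub_one_sub hlt
    rwa [show 2 ^ W - 1 - (e - 1) = 2 ^ W - e by omega, ← HW_add_two_pow_mul hlt,
      ← hsplit] at hcompl

theorem two_pow_sub_one_mul_lt (W e : ℕ) : (2 ^ W - 1) * (2 ^ W + 1 - e) < 2 ^ (2 * W) := by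
  have hP : 1 ≤ 2 ^ W := Nat.one_le_two_pow
  calc (2 ^ W - 1) * (2 ^ W + 1 - e) ≤ (2 ^ W - 1) * (2 ^ W + 1) :=
        Nat.mul_le_mul_left _ (by omega)
    _ < 2 ^ (2 * W) := by
      rw [two_mul, pow_add]; zify [hP]; nlinarith

section ClosedForms

variable {K : Type*} [Field K] {x : K}

theorem sum_range_succ_mul_pow_eq (hx : x ≠ 1) (m : ℕ) :
    ∑ i ∈ range (m + 1), (i : K) * x ^ i
      = x * ((m : K) * x ^ (m + 1) - ((m : K) + 1) * x ^ m + 1) / (x - 1) ^ 2 := by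
  refine eq_div_of_mul_eq (pow_ne_zero _ (sub_ne_zero.2 hx)) ?_
  induction m with
  | zero => simp
  | succ m ih =>
    rw [sum_range_succ, add_mul, ih]
    push_cast
    ring

theorem sum_range_succ_sq_mul_pow_eq (hx : x ≠ 1) (m : ℕ) :
    ∑ i ∈ range (m + 1), (i : K) ^ 2 * x ^ i
      = x * ((m : K) ^ 2 * x ^ (m + 2) - (2 * (m : K) ^ 2 + 2 * m - 1) * x ^ (m + 1)
          + ((m : K) + 1) ^ 2 * x ^ m - x - 1) / (x - 1) ^ 3 := by
  refine eq_div_of_mul_eq (pow_ne_zero _ (sub_ne_zero.2 hx)) ?_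
  induction m with
  | zero => simp
  | succ m ih =>
    rw [sum_range_succ, add_mul, ih]
    push_cast
    ring
end ClosedForms

theorem sum_sum_sub_sq_mul_pow_mul_pow {R : Type*} [CommRing R] (c x y : R) (n : ℕ)
    (s t : Finset ℕ) :
    ∑ i ∈ s, ∑ j ∈ t, (c - ((i : R) * j - n) ^ 2) * (x ^ i * y ^ j)
      = (c - (n : R) ^ 2) * ((∑ i ∈ s, x ^ i) * ∑ j ∈ t, y ^ j)
        + 2 * n * ((∑ i ∈ s, (i : R) * x ^ i) * ∑ j ∈ t, (j : R) * y ^ j)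
        - (∑ i ∈ s, (i : R) ^ 2 * x ^ i) * ∑ j ∈ t, (j : R) ^ 2 * y ^ j := by
  rw [sum_mul_sum, sum_mul_sum, sum_mul_sum]
  simp only [mul_sum, ← sum_add_distrib, ← sum_sub_distrib]
  exact sum_congr rfl fun i _ => sum_congr rfl fun j _ => by ring

theorem natAbs_mul_sub_le {i j n : ℕ} (hi : i ≤ n) (hj : j ≤ n) :
    ((i * j : ℤ) - n).natAbs ≤ n ^ 2 - n + 1 := by
  have h1 : (i : ℤ) * j ≤ n ^ 2 := by rw [sq]; exact_mod_cast Nat.mul_le_mul hi hj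
  have h2 : 0 ≤ (i : ℤ) * j := by positivity
  have h3 : n ≤ n ^ 2 := Nat.le_self_pow two_ne_zero n
  zify [h3]
  rw [abs_le]
  constructor <;> nlinarith

theorem sq_sub_add_one_sq_le_two_pow (n : ℕ) : (n ^ 2 - n + 1) ^ 2 ≤ 2 ^ (n + 4) := by
  induction n with
  | zero => norm_num
  | succ n ih =>
    rcases lt_or_ge n 6 with h | h
    · interval_cases n <;> norm_num
    have hsucc : (n + 1) ^ 2 - (n + 1) + 1 = n ^ 2 - n + 1 + 2 * n := by
      have := Nat.le_self_pow two_ne_zero n; rw [add_sq]; omega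
    have hstep : (n ^ 2 - n + 1 + 2 * n) ^ 2 ≤ 2 * (n ^ 2 - n + 1) ^ 2 := by
      obtain ⟨m, rfl⟩ := Nat.exists_eq_add_of_le h
      have : (6 + m) ^ 2 - (6 + m) + 1 = m ^ 2 + 11 * m + 31 := by
        rw [add_sq]; omega
      rw [this]; nlinarith
    calc ((n + 1) ^ 2 - (n + 1) + 1) ^ 2 ≤ 2 * (n ^ 2 - n + 1) ^ 2 := hsucc ▸ hstep
      _ ≤ 2 * 2 ^ (n + 4) := Nat.mul_le_mul_left 2 ih
      _ = 2 ^ (n + 1 + 4) := by ring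

theorem filter_range_product_mul_eq {n : ℕ} (hn : n ≠ 0) :
    {p ∈ range (n + 1) ×ˢ range (n + 1) | p.1 * p.2 = n} = n.divisorsAntidiagonal := by
  ext ⟨i, j⟩
  simp only [mem_filter, mem_product, mem_range, Nat.mem_divisorsAntidiagonal]
  refine ⟨fun h => ⟨h.2, hn⟩, fun ⟨h, _⟩ => ⟨⟨?_, ?_⟩, h⟩⟩
  · exact Nat.lt_succ_of_le (Nat.le_of_dvd (Nat.pos_of_ne_zero hn) ⟨j, h.symm⟩)
  · exact Nat.lt_succ_of_le
      (Nat.le_of_dvd (Nat.pos_of_ne_zero hn) ⟨i, by rw [← h, mul_comm]⟩)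

theorem Nat.card_divisorsAntidiagonal (n : ℕ) : #n.divisorsAntidiagonal = #n.divisors := by
  rw [← Nat.map_div_right_divisors, card_map]

theorem sum_range_sum_range_ite_mul_eq {n : ℕ} (hn : n ≠ 0) (a : ℕ) :
    ∑ i ∈ range (n + 1), ∑ j ∈ range (n + 1), (if i * j = n then 2 * a else a)
      = a * (#n.divisors + (n + 1) ^ 2) := by
  have hsplit (p : ℕ × ℕ) :
      (if p.1 * p.2 = n then 2 * a else a) = a + if p.1 * p.2 = n then a else 0 := by
    split_ifs <;> ring
  rw [← sum_product', sum_congr rfl fun p _ => hsplit p, sum_add_distrib, ← sum_filter,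
    filter_range_product_mul_eq hn, sum_const, sum_const, card_product, card_range,
    Nat.card_divisorsAntidiagonal, smul_eq_mul, smul_eq_mul]
  ring

def tauDigit (W n i j : ℕ) : ℕ := (2 ^ W - 1) * (2 ^ W + 1 - ((i * j : ℤ) - n).natAbs ^ 2)

def tauEncoding (W n : ℕ) : ℕ :=
  ∑ j ∈ range (n + 1),
    (∑ i ∈ range (n + 1), tauDigit W n i j * (2 ^ (2 * W)) ^ i) * (2 ^ (2 * W * (n + 1))) ^ j

section Encoding

variable {W n : ℕ}

theorem HW_tauDigit {i j : ℕ} (h : ((i * j : ℤ) - n).natAbs ^ 2 ≤ 2 ^ W) :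
    HW (tauDigit W n i j) = if i * j = n then 2 * W else W := by
  rw [tauDigit, HW_two_pow_sub_one_mul h]
  congr 1
  rw [pow_eq_zero_iff two_ne_zero, Int.natAbs_eq_zero, sub_eq_zero]
  norm_cast

theorem tauDigit_lt (i j : ℕ) : tauDigit W n i j < 2 ^ (2 * W) :=
  two_pow_sub_one_mul_lt _ _

theorem natAbs_sq_le_two_pow (hW : (n ^ 2 - n + 1) ^ 2 ≤ 2 ^ W) {i j : ℕ} (hi : i ≤ n)
    (hj : j ≤ n) : ((i * j : ℤ) - n).natAbs ^ 2 ≤ 2 ^ W :=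
  (Nat.pow_le_pow_left (natAbs_mul_sub_le hi hj) 2).trans hW

theorem HW_tauEncoding (hn : n ≠ 0) (hW : (n ^ 2 - n + 1) ^ 2 ≤ 2 ^ W) :
    HW (tauEncoding W n) = W * (#n.divisors + (n + 1) ^ 2) := by
  have hrow (j : ℕ) :
      ∑ i ∈ range (n + 1), tauDigit W n i j * (2 ^ (2 * W)) ^ i < 2 ^ (2 * W * (n + 1)) :=
    pow_mul 2 (2 * W) (n + 1) ▸ Nat.sum_range_mul_pow_lt fun i _ => tauDigit_lt i j
  have hdigits : ∀ j ∈ range (n + 1), ∀ i ∈ range (n + 1),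
      HW (tauDigit W n i j) = if i * j = n then 2 * W else W := fun j hj i hi =>
    HW_tauDigit (natAbs_sq_le_two_pow hW (by simp at hi; omega) (by simp at hj; omega))
  rw [tauEncoding, HW, Nat.digits_sum_sum_range_mul_pow one_lt_two fun j _ => hrow j,
    ← sum_range_sum_range_ite_mul_eq hn W, sum_comm]
  refine sum_congr rfl fun j hj => ?_
  rw [Nat.digits_sum_sum_range_mul_pow one_lt_two fun i _ => tauDigit_lt i j]
  exact sum_congr rfl fun i hi => hdigits j hj i hi

theorem natCast_tauDigit {R : Type*} [CommRing R] {i j : ℕ}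
    (h : ((i * j : ℤ) - n).natAbs ^ 2 ≤ 2 ^ W) :
    (tauDigit W n i j : R) = (2 ^ W - 1) * (2 ^ W + 1 - ((i : R) * j - n) ^ 2) := by
  have habs : ((((i * j : ℤ) - n).natAbs ^ 2 : ℕ) : R) = ((i : R) * j - n) ^ 2 := by
    rw [← Int.cast_natCast, Nat.cast_pow, Int.natAbs_sq]
    push_cast
    ring
  rw [tauDigit, Nat.cast_mul, Nat.cast_sub Nat.one_le_two_pow, Nat.cast_sub (h.trans (by omega)),
    habs]
  push_cast
  ring

theorem natCast_tauEncoding {R : Type*} [CommRing R] (hW : (n ^ 2 - n + 1) ^ 2 ≤ 2 ^ W) :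
    (tauEncoding W n : R) = (2 ^ W - 1) * ∑ i ∈ range (n + 1), ∑ j ∈ range (n + 1),
      (2 ^ W + 1 - ((i : R) * j - n) ^ 2)
        * ((2 ^ (2 * W)) ^ i * ((2 ^ (2 * W)) ^ (n + 1)) ^ j) := by
  rw [tauEncoding, sum_comm, mul_sum]
  push_cast
  refine sum_congr rfl fun j hj => ?_
  rw [sum_mul, mul_sum]
  refine sum_congr rfl fun i hi => ?_
  rw [natCast_tauDigit (natAbs_sq_le_two_pow hW (by simp at hi; omega) (by simp at hj; omega)),
    ← pow_mul]
  ring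
end Encoding

/-- The explicit arithmetic term `M(n)` is a nonnegative integer whose Hamming weight
equals `(n+4)·(τ(n) + (n+1)²)`; equivalently `τ(n) = HW(M(n))/(n+4) − (n+1)²`. -/
theorem stmt_8 (n : ℕ) (hn : 1 ≤ n) (W : ℕ) (hW : W = n + 4)
    (Q : ℚ) (hQ : Q = 2 ^ (2 * W)) :
    ∃ M : ℕ,
      (M : ℚ) =
          ((2 : ℚ) ^ W - (n : ℚ) ^ 2 + 1) * (Q ^ ((n + 1) ^ 2) - 1) / ((2 : ℚ) ^ W + 1)
        + 2 * (n : ℚ) * Q ^ (n + 2) * ((2 : ℚ) ^ W - 1) *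
            (Q ^ (n + 1) * (n : ℚ) - Q ^ n * ((n : ℚ) + 1) + 1) *
            (Q ^ ((n + 1) ^ 2) * (n : ℚ) - Q ^ ((n + 1) * n) * ((n : ℚ) + 1) + 1) /
            ((Q - 1) ^ 2 * (Q ^ (n + 1) - 1) ^ 2)
        - Q ^ (n + 2) * ((2 : ℚ) ^ W - 1) *
            (Q ^ (n + 2) * (n : ℚ) ^ 2 - Q ^ (n + 1) * (2 * (n : ℚ) ^ 2 + 2 * (n : ℚ) - 1)
              + Q ^ n * ((n : ℚ) + 1) ^ 2 - Q - 1) *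
            (Q ^ ((n + 1) * (n + 2)) * (n : ℚ) ^ 2
              - Q ^ ((n + 1) ^ 2) * (2 * (n : ℚ) ^ 2 + 2 * (n : ℚ) - 1)
              + Q ^ ((n + 1) * n) * ((n : ℚ) + 1) ^ 2 - Q ^ (n + 1) - 1) /
            ((Q - 1) ^ 3 * (Q ^ (n + 1) - 1) ^ 3) ∧
      HW M = (n + 4) * (n.divisors.card + (n + 1) ^ 2) := by
  have hbound : (n ^ 2 - n + 1) ^ 2 ≤ 2 ^ W := hW ▸ sq_sub_add_one_sq_le_two_pow n
  refine ⟨tauEncoding W n, ?_, by rw [HW_tauEncoding (by omega) hbound, hW]⟩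
  have hQ1 : 1 < Q := by rw [hQ]; exact one_lt_pow₀ one_lt_two (by omega)
  have hx : Q ≠ 1 := hQ1.ne'
  have hy : Q ^ (n + 1) ≠ 1 := (one_lt_pow₀ hQ1 n.succ_ne_zero).ne'
  rw [natCast_tauEncoding hbound, ← hQ, sum_sum_sub_sq_mul_pow_mul_pow, geom_sum_eq hx,
    geom_sum_eq hy, sum_range_succ_mul_pow_eq hx, sum_range_succ_mul_pow_eq hy,
    sum_range_succ_sq_mul_pow_eq hx, sum_range_succ_sq_mul_pow_eq hy, sq (n + 1),
    pow_mul Q (n + 1) (n + 1), pow_mul Q (n + 1) n, pow_mul Q (n + 1) (n + 2), pow_succ Q (n + 1)]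
  -- `Q - 1 = (2^W - 1)(2^W + 1)` is what turns the first summand into the `∑ Q^i ∑ Y^j` term.
  have hQP : Q = (2 ^ W) ^ 2 := by rw [hQ, ← pow_mul, mul_comm]
  have hP : (2 : ℚ) ^ W + 1 ≠ 0 := by positivity
  generalize Q ^ (n + 1) = y at *
  generalize (2 : ℚ) ^ W = P at *
  have hx' : Q - 1 ≠ 0 := sub_ne_zero.2 hx
  have hy' : y - 1 ≠ 0 := sub_ne_zero.2 hy
  field_simp
  subst hQP
  ring
end

section
/- Let p be a prime and n ≥ 1 an integer, and let L = ⌊log_p(n)⌋. Then the p-adic valuation of n satisfies ν_p(n) = ⌊ (gcd(n, p^(L+1))^(L+3) mod (p^(L+3) − 1)²) / (p^(L+3) − 1) ⌋. -/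
/-!
Since `ν = ν_p(n) ≤ L`, the gcd is `p ^ ν`, so with `M = p ^ (L + 3) - 1` the term is
`(M + 1) ^ ν mod M² / M`. Binomially `(M + 1) ^ ν ≡ 1 + ν M (mod M²)`, and `1 + ν M < M²`
because `ν ≤ L < M`, so the quotient is exactly `ν`.
-/

theorem Nat.add_one_pow_modEq (M k : ℕ) : (M + 1) ^ k ≡ 1 + k * M [MOD M ^ 2] := by
  rw [Nat.modEq_iff_dvd]
  have h := sq_dvd_add_pow_sub_sub (M : ℤ) 1 k
  simp only [one_pow, one_mul, add_comm (1 : ℤ)] at h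
  push_cast
  rw [← dvd_neg]
  convert h using 1
  ring

theorem Nat.add_one_pow_mod_sq_div {M k : ℕ} (hM : 1 < M) (hk : k < M) :
    (M + 1) ^ k % M ^ 2 / M = k := by
  have hlt : 1 + k * M < M ^ 2 := by nlinarith
  rw [Nat.add_one_pow_modEq M k, Nat.mod_eq_of_lt hlt, Nat.add_mul_div_right _ _ (by omega),
    Nat.div_eq_of_lt hM, zero_add]

theorem Nat.gcd_prime_pow_eq_pow_padicValNat_s18 {p n k : ℕ} [Fact p.Prime] (hn : n ≠ 0)
    (hk : padicValNat p n ≤ k) : Nat.gcd n (p ^ k) = p ^ padicValNat p n := by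
  obtain ⟨j, -, hj⟩ := (Nat.dvd_prime_pow Fact.out).mp (Nat.gcd_dvd_right n (p ^ k))
  refine Nat.dvd_antisymm ?_ (Nat.dvd_gcd pow_padicValNat_dvd (pow_dvd_pow p hk))
  rw [hj]
  exact pow_dvd_pow p ((padicValNat_dvd_iff_le hn).mp (hj ▸ Nat.gcd_dvd_left n (p ^ k)))

/-- Efficient arithmetic term for the p-adic valuation, with `L = ⌊log_p(n)⌋`. -/
theorem stmt_18 (p n : ℕ) (hp : p.Prime) (hn : 1 ≤ n) (L : ℕ) (hL : L = Nat.log p n) :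
    padicValNat p n =
      (Nat.gcd n (p ^ (L + 1))) ^ (L + 3) % (p ^ (L + 3) - 1) ^ 2 / (p ^ (L + 3) - 1) := by
  have := Fact.mk hp
  have hνL : padicValNat p n ≤ L := hL ▸ padicValNat_le_nat_log n
  have hpow : L + 3 < p ^ (L + 3) := Nat.lt_pow_self hp.one_lt
  rw [Nat.gcd_prime_pow_eq_pow_padicValNat_s18 (by omega) (by omega), ← pow_mul, mul_comm, pow_mul]
  obtain ⟨M, hM⟩ : ∃ M, p ^ (L + 3) = M + 1 := ⟨_, (Nat.sub_add_cancel (by omega)).symm⟩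
  rw [hM, Nat.add_sub_cancel, Nat.add_one_pow_mod_sq_div (by omega) (by omega)]
end
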